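/- arXiv:2312.14745 — 4 statements merged into one kernel-verified Lean document; each statement's English description precedes it below -/
import Mathlib

section
/- Let Σ be a σ-algebra on Ω and f : Σ → ℝ a countably additive function with f(X) ≤ L for all X ∈ Σ, and suppose for each n ≥ 1 there exists X_n ∈ Σ with f(X_n) > L − 1/2^n. Then f(⋃_{m≥1} ⋂_{i≥m} X_i) = L; in particular f attains its supremum on Σ. -/
open Filter Topology Finset

def CountablyAdditive {Ω : Type*} [MeasurableSpace Ω] (f : Set Ω → ℝ) : Prop :=
  ∀ X : ℕ → Set Ω, (∀ n, MeasurableSet (X n)) → Pairwise (Function.onFun Disjoint X) →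
    HasSum (fun n => f (X n)) (f (⋃ n, X n))

section Aux

variable {Ω : Type*} [MeasurableSpace Ω] {f : Set Ω → ℝ}

lemma f_empty (hf : CountablyAdditive f) : f ∅ = 0 := by
  have h := hf (fun _ => ∅) (fun _ => MeasurableSet.empty)
    (by intro i j _; simp [Function.onFun])
  simp only [Set.iUnion_empty] at h
  have h1 : Tendsto (fun _ : ℕ => f ∅) atTop (nhds 0) := h.summable.tendsto_atTop_zero
  exact tendsto_nhds_unique tendsto_const_nhds h1

lemma f_add (hf : CountablyAdditive f) {A B : Set Ω} (hA : MeasurableSet A)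
    (hB : MeasurableSet B) (hAB : Disjoint A B) : f (A ∪ B) = f A + f B := by
  set g : ℕ → Set Ω := fun n => if n = 0 then A else if n = 1 then B else ∅ with hg
  have hmeas : ∀ n, MeasurableSet (g n) := by
    intro n; simp only [hg]
    split_ifs
    · exact hA
    · exact hB
    · exact MeasurableSet.empty
  have hdisj : Pairwise (Function.onFun Disjoint g) := by
    intro i j hij
    simp only [Function.onFun, hg]
    split_ifs <;> first
      | exact absurd rfl (by omega)
      | exact hAB
      | exact hAB.symm
      | exact Set.disjoint_empty _
      | exact Set.empty_disjoint _
      | (exfalso; omega)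
  have hunion : (⋃ n, g n) = A ∪ B := by
    apply Set.Subset.antisymm
    · intro x hx
      rcases Set.mem_iUnion.1 hx with ⟨n, hn⟩
      simp only [hg] at hn
      split_ifs at hn with h1 h2
      · exact Or.inl hn
      · exact Or.inr hn
      · exact absurd hn (Set.notMem_empty x)
    · rintro x (hx | hx)
      · exact Set.mem_iUnion.2 ⟨0, by simpa [hg] using hx⟩
      · exact Set.mem_iUnion.2 ⟨1, by simpa [hg] using hx⟩
  have h := hf g hmeas hdisj
  rw [hunion] at h
  have h2 : HasSum (fun n => f (g n)) (∑ b ∈ ({0, 1} : Finset ℕ), f (g b)) := by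
    apply hasSum_sum_of_ne_finset_zero
    intro n hn
    simp only [Finset.mem_insert, Finset.mem_singleton, not_or] at hn
    simp [hg, hn.1, hn.2, f_empty hf]
  rw [Finset.sum_pair (by norm_num : (0 : ℕ) ≠ 1)] at h2
  simpa [hg] using h.unique h2

lemma f_tendsto_mono (hf : CountablyAdditive f) (W : ℕ → Set Ω)
    (hW : ∀ n, MeasurableSet (W n)) (hmono : Monotone W) :
    Tendsto (fun n => f (W n)) atTop (nhds (f (⋃ n, W n))) := by
  have hd : ∀ n, MeasurableSet (disjointed W n) := MeasurableSet.disjointed hW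
  have h := hf (disjointed W) hd (disjoint_disjointed W)
  rw [iUnion_disjointed] at h
  have hpart : ∀ n, ∑ i ∈ Finset.range (n + 1), f (disjointed W i) = f (W n) := by
    intro n
    induction n with
    | zero => simp [disjointed_zero]
    | succ k ih =>
      rw [Finset.sum_range_succ, ih, hmono.disjointed_add_one]
      have hadd := f_add hf (hW k) ((hW (k + 1)).diff (hW k)) Set.disjoint_sdiff_right
      rw [Set.union_diff_cancel (hmono (Nat.le_succ k))] at hadd
      exact hadd.symm
  have ht := (h.tendsto_sum_nat).comp (tendsto_add_atTop_nat 1)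
  have heq : (fun n => f (W n)) =
      (fun n => ∑ i ∈ Finset.range n, f (disjointed W i)) ∘ (fun n => n + 1) := by
    funext n
    exact (hpart n).symm
  rw [heq]
  exact ht

lemma f_compl (hf : CountablyAdditive f) {S : Set Ω} (hS : MeasurableSet S) :
    f Sᶜ = f Set.univ - f S := by
  have h := f_add hf hS hS.compl disjoint_compl_right
  rw [Set.union_compl_self] at h
  linarith

lemma f_tendsto_anti (hf : CountablyAdditive f) (W : ℕ → Set Ω)
    (hW : ∀ n, MeasurableSet (W n)) (hanti : Antitone W) :
    Tendsto (fun n => f (W n)) atTop (nhds (f (⋂ n, W n))) := by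
  have h := f_tendsto_mono hf (fun n => (W n)ᶜ) (fun n => (hW n).compl)
    (fun a b hab => Set.compl_subset_compl.2 (hanti hab))
  rw [← Set.compl_iInter] at h
  have hmeasI : MeasurableSet (⋂ n, W n) := MeasurableSet.iInter fun n => hW n
  rw [f_compl hf hmeasI] at h
  have heq : (fun n => f ((W n)ᶜ)) = fun n => f Set.univ - f (W n) :=
    funext fun n => f_compl hf (hW n)
  rw [heq] at h
  have h2 := (tendsto_const_nhds (x := f Set.univ) (f := atTop)).sub h
  simpa [sub_sub_cancel] using h2

lemma f_inter_ge (hf : CountablyAdditive f) (L : ℝ)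
    (hL : ∀ X : Set Ω, MeasurableSet X → f X ≤ L)
    {A B : Set Ω} (hA : MeasurableSet A) (hB : MeasurableSet B) :
    f A + f B - L ≤ f (A ∩ B) := by
  have h1 : f (A ∪ B) = f A + f (B \ A) := by
    have h := f_add hf hA (hB.diff hA) Set.disjoint_sdiff_right
    rwa [Set.union_diff_self] at h
  have h2 : f B = f (B ∩ A) + f (B \ A) := by
    have h := f_add hf (hB.inter hA) (hB.diff hA)
      (Set.disjoint_sdiff_right.mono_left Set.inter_subset_right)
    rwa [Set.inter_union_diff] at h
  have h3 : f (A ∪ B) ≤ L := hL _ (hA.union hB)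
  rw [Set.inter_comm]
  linarith

end Aux

theorem stmt2 {Ω : Type*} [MeasurableSpace Ω] (f : Set Ω → ℝ)
    (hf : CountablyAdditive f) (L : ℝ)
    (hL : ∀ X : Set Ω, MeasurableSet X → f X ≤ L)
    (X : ℕ → Set Ω) (hX : ∀ n, MeasurableSet (X n))
    (hval : ∀ n : ℕ, 1 ≤ n → f (X n) > L - 1 / 2 ^ n) :
    f (⋃ (m : ℕ) (_ : 1 ≤ m), ⋂ (i : ℕ) (_ : m ≤ i), X i) = L ∧
      ∃ Z : Set Ω, MeasurableSet Z ∧ f Z = L := by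
  set Z : ℕ → Set Ω := fun m => ⋂ (i : ℕ), ⋂ (_ : m ≤ i), X i with hZ
  have hZmeas : ∀ m, MeasurableSet (Z m) := fun m =>
    MeasurableSet.iInter fun i => MeasurableSet.iInter fun _ => hX i
  -- lower bound on f (Z m)
  have key : ∀ m, 1 ≤ m → L - 2 / 2 ^ m ≤ f (Z m) := by
    intro m hm
    set W : ℕ → Set Ω := fun k => ⋂ i ∈ Finset.Icc m (m + k), X i with hW
    have hWmeas : ∀ k, MeasurableSet (W k) :=
      fun k => Finset.measurableSet_biInter _ fun i _ => hX i
    have hWanti : Antitone W := by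
      intro a b hab
      exact Set.biInter_subset_biInter_left
        (fun i hi => Finset.Icc_subset_Icc_right (by omega) hi)
    have hWbound : ∀ k, L - 2 / 2 ^ m + 1 / 2 ^ (m + k) ≤ f (W k) := by
      intro k
      induction k with
      | zero =>
        have hW0 : W 0 = X m := by
          rw [hW]
          simp only [Nat.add_zero, Finset.Icc_self, Finset.set_biInter_singleton]
        rw [hW0]
        have hv := hval m hm
        have hpow : (2 : ℝ) / 2 ^ m - 1 / 2 ^ m = 1 / 2 ^ m := by ring
        have : (1 : ℝ) / 2 ^ (m + 0) = 1 / 2 ^ m := by norm_num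
        linarith
      | succ k ih =>
        have hstep : W (k + 1) = W k ∩ X (m + k + 1) := by
          have h1 : m + (k + 1) = (m + k) + 1 := rfl
          rw [hW]
          simp only []
          rw [h1, ← Finset.insert_Icc_right_eq_Icc_add_one (by omega), Finset.set_biInter_insert,
            Set.inter_comm]
        rw [hstep]
        have hge := f_inter_ge hf L hL (hWmeas k) (hX (m + k + 1))
        have hv := hval (m + k + 1) (by omega)
        have hpow : (1 : ℝ) / 2 ^ (m + k) - 1 / 2 ^ (m + k + 1) = 1 / 2 ^ (m + (k + 1)) := by
          have h1 : m + (k + 1) = (m + k) + 1 := rfl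
          rw [h1, pow_succ]
          ring
        linarith
    have hiInter : (⋂ k, W k) = Z m := by
      ext x
      simp only [hW, hZ, Set.mem_iInter, Finset.mem_Icc]
      constructor
      · intro h i hi
        exact h (i - m) i ⟨hi, by omega⟩
      · intro h k i hi
        exact h i hi.1
    have htend := f_tendsto_anti hf W hWmeas hWanti
    rw [hiInter] at htend
    refine ge_of_tendsto' htend fun k => ?_
    have hb := hWbound k
    have hp : (0 : ℝ) < 1 / 2 ^ (m + k) := by positivity
    linarith
  -- the union
  have hYeq : (⋃ (m : ℕ) (_ : 1 ≤ m), Z m) = ⋃ n, Z (n + 1) := by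
    ext x
    simp only [Set.mem_iUnion]
    constructor
    · rintro ⟨m, hm, hx⟩
      exact ⟨m - 1, by rwa [Nat.sub_add_cancel hm]⟩
    · rintro ⟨n, hx⟩
      exact ⟨n + 1, by omega, hx⟩
  have hZmono : Monotone fun n => Z (n + 1) := by
    intro a b hab x hx
    simp only [hZ, Set.mem_iInter] at hx ⊢
    intro i hi
    exact hx i (by omega)
  have htend := f_tendsto_mono hf (fun n => Z (n + 1)) (fun n => hZmeas _) hZmono
  rw [← hYeq] at htend
  have hlim : Tendsto (fun n => f (Z (n + 1))) atTop (nhds L) := by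
    have h0 : Tendsto (fun n : ℕ => ((1 : ℝ) / 2) ^ n) atTop (nhds 0) :=
      tendsto_pow_atTop_nhds_zero_of_lt_one (by norm_num) (by norm_num)
    have heq : (fun n : ℕ => L - 2 / 2 ^ (n + 1)) = fun n => L - ((1 : ℝ) / 2) ^ n := by
      funext n
      have : (2 : ℝ) / 2 ^ (n + 1) = ((1 : ℝ) / 2) ^ n := by
        rw [div_pow, one_pow, pow_succ]
        field_simp
      rw [this]
    have hlo : Tendsto (fun n : ℕ => L - 2 / 2 ^ (n + 1)) atTop (nhds L) := by
      rw [heq]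
      simpa using (tendsto_const_nhds (x := L) (f := atTop)).sub h0
    apply tendsto_of_tendsto_of_tendsto_of_le_of_le hlo
      (tendsto_const_nhds (x := L) (f := atTop))
    · intro n
      exact key (n + 1) (by omega)
    · intro n
      exact hL _ (hZmeas _)
  have hfY : f (⋃ (m : ℕ) (_ : 1 ≤ m), Z m) = L := tendsto_nhds_unique htend hlim
  exact ⟨hfY, ⋃ (m : ℕ) (_ : 1 ≤ m), Z m,
    MeasurableSet.iUnion fun m => MeasurableSet.iUnion fun _ => hZmeas m, hfY⟩
end

section
/- Let Σ be a σ-algebra and f : Σ → ℝ a bounded countably additive function. Then f attains both a global maximum and a global minimum on Σ. -/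
open MeasureTheory

namespace MeasureTheory.VectorMeasure

variable {α M : Type*} [MeasurableSpace α] [TopologicalSpace M] [AddCommGroup M] [PartialOrder M]
  [IsOrderedAddMonoid M] [T2Space M]

theorem apply_le_of_zero_le_restrict_of_restrict_compl_le_zero {v : VectorMeasure α M}
    {i Y : Set α} (hi : MeasurableSet i) (hpos : 0 ≤[i] v) (hneg : v ≤[iᶜ] 0)
    (hY : MeasurableSet Y) : v Y ≤ v i := by
  have hYi : MeasurableSet (Y ∩ i) := hY.inter hi
  have hout : v (Y \ i) ≤ 0 := by
    simpa using subset_le_of_restrict_le_restrict v 0 hi.compl hneg (Set.sdiff_subset_compl Y i)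
  have hin : 0 ≤ v (i \ (Y ∩ i)) := by
    simpa using subset_le_of_restrict_le_restrict 0 v hi hpos Set.sdiff_subset
  calc v Y = v (Y ∩ i) + v (Y \ i) := by
        rw [← of_union Set.disjoint_sdiff_inter.symm hYi (hY.diff hi), Set.inter_union_sdiff]
    _ ≤ v (Y ∩ i) + v (i \ (Y ∩ i)) := add_le_add_right (hout.trans hin) _
    _ = v i := of_add_of_sdiff hYi hi Set.inter_subset_right

theorem apply_compl_le_of_zero_le_restrict_of_restrict_compl_le_zero [IsTopologicalAddGroup M]
    {v : VectorMeasure α M} {i Y : Set α} (hi : MeasurableSet i) (hpos : 0 ≤[i] v) (hneg : v ≤[iᶜ] 0)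
    (hY : MeasurableSet Y) : v iᶜ ≤ v Y := by
  have hpos' : 0 ≤[iᶜ] -v := by simpa using neg_le_neg v 0 hi.compl hneg
  have hneg' : -v ≤[iᶜᶜ] 0 := by simpa using neg_le_neg 0 v hi hpos
  simpa using apply_le_of_zero_le_restrict_of_restrict_compl_le_zero hi.compl hpos' hneg' hY

end MeasureTheory.VectorMeasure

namespace CountablyAdditive

variable {Ω : Type*} [MeasurableSpace Ω] {f : Set Ω → ℝ}

theorem apply_empty (hf : CountablyAdditive f) : f ∅ = 0 := by
  have h := hf (fun _ => ∅) (fun _ => .empty) (fun _ _ _ => disjoint_bot_left)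
  rw [Set.iUnion_empty] at h
  exact tendsto_nhds_unique tendsto_const_nhds h.summable.tendsto_atTop_zero

open Classical in
noncomputable def toSignedMeasure (hf : CountablyAdditive f) : SignedMeasure Ω where
  measureOf' X := if MeasurableSet X then f X else 0
  empty' := by simp [hf.apply_empty]
  not_measurable' _ hX := if_neg hX
  m_iUnion' X hX hd := by
    simpa only [if_pos (hX _), if_pos (MeasurableSet.iUnion hX)] using hf X hX hd

theorem toSignedMeasure_apply (hf : CountablyAdditive f) {X : Set Ω} (hX : MeasurableSet X) :
    hf.toSignedMeasure X = f X := by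
  classical exact if_pos hX

end CountablyAdditive

theorem stmt3_general {Ω : Type*} [MeasurableSpace Ω] (f : Set Ω → ℝ)
    (hf : CountablyAdditive f) :
    (∃ X : Set Ω, MeasurableSet X ∧ ∀ Y : Set Ω, MeasurableSet Y → f Y ≤ f X) ∧
      (∃ X : Set Ω, MeasurableSet X ∧ ∀ Y : Set Ω, MeasurableSet Y → f X ≤ f Y) := by
  obtain ⟨P, hP, hpos, hneg⟩ := hf.toSignedMeasure.exists_compl_positive_negative
  refine ⟨⟨P, hP, fun Y hY => ?_⟩, ⟨Pᶜ, hP.compl, fun Y hY => ?_⟩⟩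
  · simpa only [hf.toSignedMeasure_apply, hY, hP] using
      VectorMeasure.apply_le_of_zero_le_restrict_of_restrict_compl_le_zero hP hpos hneg hY
  · simpa only [hf.toSignedMeasure_apply, hY, hP.compl] using
      VectorMeasure.apply_compl_le_of_zero_le_restrict_of_restrict_compl_le_zero hP hpos hneg hY

theorem stmt3 {Ω : Type*} [MeasurableSpace Ω] (f : Set Ω → ℝ)
    (hf : CountablyAdditive f)
    (hbd : ∃ C : ℝ, ∀ X : Set Ω, MeasurableSet X → |f X| ≤ C) :
    (∃ X : Set Ω, MeasurableSet X ∧ ∀ Y : Set Ω, MeasurableSet Y → f Y ≤ f X) ∧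
      (∃ X : Set Ω, MeasurableSet X ∧ ∀ Y : Set Ω, MeasurableSet Y → f X ≤ f Y) :=
  stmt3_general f hf
end

section
/- Let Γ be a finite Bayesian game, σ a Nash equilibrium, i a player with type t_i, and τ a strategy profile. Let p^τ_{(i,t_i,a_{−i})} denote the probability that the other players play profile a_{−i} under τ conditioned on i having type t_i, similarly for σ, and let Δ = Σ_{a_{−i}} |p^σ_{(i,t_i,a_{−i})} − p^τ_{(i,t_i,a_{−i})}|. Then i's conditional expected utility satisfies u_i(t_i, τ) ≤ u_i(t_i, σ) + Δ·M, where M is the difference between the maximum and minimum utility in Γ. -/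
open Finset

/-- A probability distribution on a finite type. -/
def IsDist {α : Type*} [Fintype α] (p : α → ℝ) : Prop :=
  (∀ a, 0 ≤ p a) ∧ ∑ a, p a = 1

/-- Combine an action `ai` for player `i` with an action profile `b` of the other players
into a full action profile. -/
def combine {I : Type*} [DecidableEq I] {A : I → Type*} (i : I) (ai : A i)
    (b : ∀ j : {j : I // j ≠ i}, A j.1) : ∀ j, A j :=
  fun j => if h : j = i then cast (congrArg A h.symm) ai else b ⟨j, h⟩

/-- `condP T A q s i ti b` is the probability that the players other than `i` play the profile
`b` under the strategy profile `s`, conditioned on player `i` having type `ti` (prior `q` over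
type profiles). -/
noncomputable def condP {I : Type*} [Fintype I] [DecidableEq I] (T A : I → Type*)
    [∀ i, Fintype (T i)] [∀ i, Fintype (A i)] [∀ i, DecidableEq (T i)]
    (q : (∀ j, T j) → ℝ) (s : ∀ j, T j → A j → ℝ) (i : I) (ti : T i)
    (b : ∀ j : {j : I // j ≠ i}, A j.1) : ℝ :=
  (∑ t : ∀ j, T j, if t i = ti then q t * ∏ j : {j : I // j ≠ i}, s j.1 (t j.1) (b j) else 0)
    / (∑ t : ∀ j, T j, if t i = ti then q t else 0)

/-- The conditional expected utility of player `i` with type `ti` under strategy profile `s`. -/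
noncomputable def uCond {I : Type*} [Fintype I] [DecidableEq I] (T A : I → Type*)
    [∀ i, Fintype (T i)] [∀ i, Fintype (A i)] [∀ i, DecidableEq (T i)] [∀ i, DecidableEq (A i)]
    (q : (∀ j, T j) → ℝ) (U : ∀ i, T i → (∀ j, A j) → ℝ)
    (s : ∀ j, T j → A j → ℝ) (i : I) (ti : T i) : ℝ :=
  ∑ ai : A i, s i ti ai *
    ∑ b : ∀ j : {j : I // j ≠ i}, A j.1, condP T A q s i ti b * U i ti (combine i ai b)

/-!
Only the beliefs of player `i` about the others change between `σ` and `τ`. Against a fixed own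
action, replacing the belief `p^σ` by `p^τ` changes the expected utility by
`∑ (p^τ - p^σ) (u - min u)`, since both beliefs have the same total mass; this is at most
`Δ · M`. Averaging over `τ_i(t_i)` and comparing with the best response value `u_i(t_i, σ)` gives
the bound.
-/

lemma Finset.sum_mul_le_sum_mul_add_sum_abs_sub_mul {ι : Type*} {s : Finset ι} {p p' f : ι → ℝ}
    {m M : ℝ} (hsum : ∑ b ∈ s, p b = ∑ b ∈ s, p' b) (hm : ∀ b ∈ s, m ≤ f b)
    (hM : ∀ b ∈ s, f b ≤ M) :
    ∑ b ∈ s, p' b * f b ≤ ∑ b ∈ s, p b * f b + (∑ b ∈ s, |p b - p' b|) * (M - m) := by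
  have hshift : ∑ b ∈ s, p' b * f b - ∑ b ∈ s, p b * f b
      = ∑ b ∈ s, (p' b - p b) * (f b - m) := by
    have hmass : ∑ b ∈ s, (p' b - p b) * m = 0 := by
      rw [← sum_mul, sum_sub_distrib, hsum, sub_self, zero_mul]
    calc ∑ b ∈ s, p' b * f b - ∑ b ∈ s, p b * f b
        = ∑ b ∈ s, (p' b - p b) * (f b - m) + ∑ b ∈ s, (p' b - p b) * m := by
          rw [← sum_sub_distrib, ← sum_add_distrib]
          exact sum_congr rfl fun b _ => by ring
      _ = ∑ b ∈ s, (p' b - p b) * (f b - m) := by rw [hmass, add_zero]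
  rw [← sub_le_iff_le_add', hshift, sum_mul]
  refine sum_le_sum fun b hb => ?_
  rw [abs_sub_comm]
  calc (p' b - p b) * (f b - m) ≤ |p' b - p b| * (f b - m) :=
        mul_le_mul_of_nonneg_right (le_abs_self _) (sub_nonneg.mpr (hm b hb))
    _ ≤ |p' b - p b| * (M - m) :=
        mul_le_mul_of_nonneg_left (by linarith [hM b hb]) (abs_nonneg _)

lemma IsDist.sum_mul_le_sum_mul_add {α : Type*} [Fintype α] {d x y : α → ℝ} {c : ℝ}
    (hd : IsDist d) (h : ∀ a, x a ≤ y a + c) :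
    ∑ a, d a * x a ≤ ∑ a, d a * y a + c :=
  calc ∑ a, d a * x a ≤ ∑ a, d a * (y a + c) :=
        sum_le_sum fun a _ => mul_le_mul_of_nonneg_left (h a) (hd.1 a)
    _ = ∑ a, d a * y a + (∑ a, d a) * c := by simp only [mul_add, sum_add_distrib, sum_mul]
    _ = ∑ a, d a * y a + c := by rw [hd.2, one_mul]

-- `D / D` rather than `1`: the marginal `D` of `ti` may vanish, and then every `condP` is `0`.
lemma sum_condP {I : Type*} [Fintype I] [DecidableEq I] (T A : I → Type*)
    [∀ i, Fintype (T i)] [∀ i, Fintype (A i)] [∀ i, DecidableEq (T i)]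
    (q : (∀ j, T j) → ℝ) (s : ∀ j, T j → A j → ℝ) (hs : ∀ j t, ∑ a, s j t a = 1) (i : I)
    (ti : T i) :
    ∑ b : ∀ j : {j : I // j ≠ i}, A j.1, condP T A q s i ti b
      = (∑ t : ∀ j, T j, if t i = ti then q t else 0)
        / (∑ t : ∀ j, T j, if t i = ti then q t else 0) := by
  unfold condP
  rw [← sum_div, sum_comm]
  congr 1
  refine sum_congr rfl fun t _ => ?_
  split_ifs
  · simp only [← mul_sum, ← Fintype.prod_sum, hs, prod_const_one, mul_one]
  · exact sum_const_zero

theorem stmt10_general {I : Type*} [Fintype I] [DecidableEq I] (T A : I → Type*)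
    [∀ i, Fintype (T i)] [∀ i, Fintype (A i)] [∀ i, DecidableEq (T i)] [∀ i, DecidableEq (A i)]
    (q : (∀ j, T j) → ℝ) (U : ∀ i, T i → (∀ j, A j) → ℝ)
    (σ τ : ∀ j, T j → A j → ℝ)
    (hσ : ∀ j t, IsDist (σ j t)) (hτ : ∀ j t, IsDist (τ j t))
    (i : I) (ti : T i)
    (hNash : ∀ d : A i → ℝ, IsDist d →
      (∑ ai : A i, d ai * ∑ b : ∀ j : {j : I // j ≠ i}, A j.1,
          condP T A q σ i ti b * U i ti (combine i ai b))
        ≤ uCond T A q U σ i ti)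
    (Mmin Mmax : ℝ)
    (hMax : IsGreatest {r : ℝ | ∃ (j : I) (t : T j) (a : ∀ k, A k), r = U j t a} Mmax)
    (hMin : IsLeast {r : ℝ | ∃ (j : I) (t : T j) (a : ∀ k, A k), r = U j t a} Mmin) :
    uCond T A q U τ i ti ≤ uCond T A q U σ i ti +
      (∑ b : ∀ j : {j : I // j ≠ i}, A j.1,
        |condP T A q σ i ti b - condP T A q τ i ti b|) * (Mmax - Mmin) := by
  have hmass : ∑ b, condP T A q σ i ti b = ∑ b, condP T A q τ i ti b := by
    rw [sum_condP T A q σ fun j t => (hσ j t).2, sum_condP T A q τ fun j t => (hτ j t).2]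
  have hbelief : ∀ ai : A i,
      ∑ b, condP T A q τ i ti b * U i ti (combine i ai b)
        ≤ ∑ b, condP T A q σ i ti b * U i ti (combine i ai b)
          + (∑ b, |condP T A q σ i ti b - condP T A q τ i ti b|) * (Mmax - Mmin) :=
    fun ai => Finset.sum_mul_le_sum_mul_add_sum_abs_sub_mul hmass
      (fun b _ => hMin.2 ⟨i, ti, combine i ai b, rfl⟩)
      (fun b _ => hMax.2 ⟨i, ti, combine i ai b, rfl⟩)
  calc uCond T A q U τ i ti
      ≤ (∑ ai, τ i ti ai * ∑ b, condP T A q σ i ti b * U i ti (combine i ai b))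
          + (∑ b, |condP T A q σ i ti b - condP T A q τ i ti b|) * (Mmax - Mmin) :=
        (hτ i ti).sum_mul_le_sum_mul_add hbelief
    _ ≤ _ := add_le_add_left (hNash _ (hτ i ti)) _

/-- In a finite Bayesian game, if `σ` is a Nash equilibrium (so that, for player `i` of type
`ti`, every response distribution against `σ₋ᵢ` yields conditional expected utility at most
`u_i(ti, σ)`), then for every strategy profile `τ` the conditional expected utility satisfies
`u_i(ti, τ) ≤ u_i(ti, σ) + Δ·M`, where `Δ` is the L1 distance between the conditional
distributions over the other players' action profiles under `σ` and `τ`, and `M` is the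
difference between the maximum and minimum utility in the game. -/
theorem stmt10 {I : Type*} [Fintype I] [DecidableEq I] (T A : I → Type*)
    [∀ i, Fintype (T i)] [∀ i, Fintype (A i)] [∀ i, DecidableEq (T i)] [∀ i, DecidableEq (A i)]
    (q : (∀ j, T j) → ℝ) (U : ∀ i, T i → (∀ j, A j) → ℝ)
    (σ τ : ∀ j, T j → A j → ℝ)
    (hq : IsDist q) (hσ : ∀ j t, IsDist (σ j t)) (hτ : ∀ j t, IsDist (τ j t))
    (i : I) (ti : T i)
    (hNash : ∀ d : A i → ℝ, IsDist d →
      (∑ ai : A i, d ai * ∑ b : ∀ j : {j : I // j ≠ i}, A j.1,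
          condP T A q σ i ti b * U i ti (combine i ai b))
        ≤ uCond T A q U σ i ti)
    (Mmin Mmax : ℝ)
    (hMax : IsGreatest {r : ℝ | ∃ (j : I) (t : T j) (a : ∀ k, A k), r = U j t a} Mmax)
    (hMin : IsLeast {r : ℝ | ∃ (j : I) (t : T j) (a : ∀ k, A k), r = U j t a} Mmin) :
    uCond T A q U τ i ti ≤ uCond T A q U σ i ti +
      (∑ b : ∀ j : {j : I // j ≠ i}, A j.1,
        |condP T A q σ i ti b - condP T A q τ i ti b|) * (Mmax - Mmin) :=
  stmt10_general T A q U σ τ hσ hτ i ti hNash Mmin Mmax hMax hMin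
end

section
/- Consider the Bayesian game with players P = {1,2,3}, types and actions T_i = A_i = {0,1}, type profiles drawn uniformly from {(t_1,t_2,t_3) : t_1+t_2+t_3 odd}, and utility 1 for every player if a_1+a_2+a_3 is odd and 0 otherwise. Then: (i) the marginal type distribution of each player is uniform on {0,1} and the types are pairwise independent; (ii) the strategy profile τ where each player plays her own type yields expected utility 1 for every player and is a Nash equilibrium; (iii) the strategy profile σ where each player plays 0 or 1 uniformly at random independently of her type yields expected utility 1/2 for every player and is a Nash equilibrium. -/
/-!
Every expected utility is at most 1, and under `τtype` the actions equal the types, whose sum is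
odd almost surely; so `τtype` attains the maximum and no deviation can help. Under `σunif`, as
soon as one player mixes uniformly, flipping her action is a measure-preserving involution of
action profiles that switches parity, so the sum is odd with probability exactly 1/2 whatever the
others do; in particular every deviation of a single player still leaves a uniform opponent.
-/

open Finset

/-- The prior over type profiles: uniform over the four profiles `(t₁,t₂,t₃)` with odd sum. -/
noncomputable def oddPrior (t : Fin 3 → Bool) : ℝ :=
  if xor (t 0) (xor (t 1) (t 2)) then 1 / 4 else 0

/-- Every player gets utility 1 if `a₁ + a₂ + a₃` is odd, and 0 otherwise. -/
def oddU (a : Fin 3 → Bool) : ℝ :=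
  if xor (a 0) (xor (a 1) (a 2)) then 1 else 0

/-- Expected utility of player `i` when each player `j` of type `t` plays action `a` with
probability `s j t a`. -/
noncomputable def oddEU (s : Fin 3 → Bool → Bool → ℝ) (i : Fin 3) : ℝ :=
  ∑ t : Fin 3 → Bool, oddPrior t *
    ∑ a : Fin 3 → Bool, (∏ j, s j (t j) (a j)) * oddU a

/-- A behavioral strategy: a distribution over the two actions for each type. -/
def IsStrat (s : Bool → Bool → ℝ) : Prop :=
  ∀ t, (∀ a, 0 ≤ s t a) ∧ s t false + s t true = 1

/-- Each player plays her own type. -/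
def τtype : Fin 3 → Bool → Bool → ℝ := fun _ t a => if a = t then 1 else 0

/-- Each player plays uniformly at random, independently of her type. -/
noncomputable def σunif : Fin 3 → Bool → Bool → ℝ := fun _ _ _ => 1 / 2

lemma sum_fin_three_bool {M : Type*} [AddCommMonoid M] (f : (Fin 3 → Bool) → M) :
    ∑ t, f t = ∑ a, ∑ b, ∑ c, f ![a, b, c] := by
  let e : Bool × Bool × Bool ≃ (Fin 3 → Bool) :=
    { toFun p := ![p.1, p.2.1, p.2.2]
      invFun t := (t 0, t 1, t 2)
      left_inv _ := rfl
      right_inv t := by ext i; fin_cases i <;> rfl }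
  rw [← e.sum_comp]
  simp only [Fintype.sum_prod_type]
  rfl

lemma oddPrior_nonneg (t : Fin 3 → Bool) : 0 ≤ oddPrior t := by
  unfold oddPrior; split_ifs <;> norm_num

lemma sum_oddPrior : ∑ t, oddPrior t = 1 := by
  rw [sum_fin_three_bool]; simp [oddPrior]; norm_num

lemma oddPrior_marginal (i : Fin 3) (b : Bool) :
    (∑ t : Fin 3 → Bool, if t i = b then oddPrior t else 0) = 1 / 2 := by
  rw [sum_fin_three_bool]; fin_cases i <;> cases b <;> simp [oddPrior] <;> norm_num

lemma oddPrior_pair_marginal {i j : Fin 3} (hij : i ≠ j) (b c : Bool) :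
    (∑ t : Fin 3 → Bool, if t i = b ∧ t j = c then oddPrior t else 0) = 1 / 4 := by
  rw [sum_fin_three_bool]
  fin_cases i <;> fin_cases j <;> cases b <;> cases c <;> simp [oddPrior] at hij ⊢

lemma oddU_le_one (a : Fin 3 → Bool) : oddU a ≤ 1 := by
  unfold oddU; split_ifs <;> norm_num

lemma oddU_update_not (a : Fin 3 → Bool) (k : Fin 3) :
    oddU (Function.update a k (!a k)) = 1 - oddU a := by
  unfold oddU
  fin_cases k <;> simp <;> cases a 0 <;> cases a 1 <;> cases a 2 <;> simp

noncomputable def oddProb (p : Fin 3 → Bool → ℝ) : ℝ :=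
  ∑ a : Fin 3 → Bool, (∏ j, p j (a j)) * oddU a

lemma oddEU_eq_sum_oddProb (s : Fin 3 → Bool → Bool → ℝ) (i : Fin 3) :
    oddEU s i = ∑ t, oddPrior t * oddProb (fun j => s j (t j)) := rfl

lemma sum_prod_eq_one {ι : Type*} [Fintype ι] [DecidableEq ι] (p : ι → Bool → ℝ)
    (hp : ∀ j, p j false + p j true = 1) : ∑ a : ι → Bool, ∏ j, p j (a j) = 1 := by
  rw [← Fintype.prod_sum]
  exact Finset.prod_eq_one fun j _ => by rw [Fintype.sum_bool, add_comm, hp]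

lemma oddProb_le_one (p : Fin 3 → Bool → ℝ) (hp₀ : ∀ j a, 0 ≤ p j a)
    (hp : ∀ j, p j false + p j true = 1) : oddProb p ≤ 1 :=
  calc oddProb p ≤ ∑ a : Fin 3 → Bool, ∏ j, p j (a j) :=
        Finset.sum_le_sum fun a _ => mul_le_of_le_one_right
          (Finset.prod_nonneg fun j _ => hp₀ j _) (oddU_le_one a)
    _ = 1 := sum_prod_eq_one p hp

/-- Flipping the action of a player who mixes uniformly preserves the probability of every action
profile and switches the parity, so odd and even sums are equally likely. -/
lemma oddProb_of_uniform (p : Fin 3 → Bool → ℝ) (k : Fin 3) (hk : ∀ a, p k a = 1 / 2)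
    (hp : ∀ j, p j false + p j true = 1) : oddProb p = 1 / 2 := by
  let toggle : (Fin 3 → Bool) → (Fin 3 → Bool) := fun a => Function.update a k (!a k)
  have toggle_involutive : Function.Involutive toggle := fun a => by simp [toggle]
  have prod_toggle (a : Fin 3 → Bool) : ∏ j, p j (toggle a j) = ∏ j, p j (a j) := by
    refine Finset.prod_congr rfl fun j _ => ?_
    by_cases hj : j = k
    · subst hj; simp [toggle, hk]
    · simp [toggle, hj]
  have : oddProb p = 1 - oddProb p :=
    calc oddProb p = ∑ a, (∏ j, p j (toggle a j)) * oddU (toggle a) :=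
          (Equiv.sum_comp (toggle_involutive.toPerm toggle) _).symm
      _ = ∑ a : Fin 3 → Bool, (∏ j, p j (a j)) * (1 - oddU a) := by
          simp only [prod_toggle, toggle, oddU_update_not]
      _ = 1 - oddProb p := by
          simp only [mul_sub, mul_one, Finset.sum_sub_distrib, sum_prod_eq_one p hp, oddProb]
  linarith

lemma oddEU_le_one (s : Fin 3 → Bool → Bool → ℝ) (hs : ∀ j, IsStrat (s j)) (i : Fin 3) :
    oddEU s i ≤ 1 :=
  calc oddEU s i ≤ ∑ t, oddPrior t * 1 :=
        Finset.sum_le_sum fun t _ => mul_le_mul_of_nonneg_left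
          (oddProb_le_one _ (fun j => (hs j (t j)).1) (fun j => (hs j (t j)).2))
          (oddPrior_nonneg t)
    _ = 1 := by simp [sum_oddPrior]

lemma oddEU_of_uniform (s : Fin 3 → Bool → Bool → ℝ) (k : Fin 3) (hk : ∀ t a, s k t a = 1 / 2)
    (hs : ∀ j t, s j t false + s j t true = 1) (i : Fin 3) : oddEU s i = 1 / 2 := by
  simp only [oddEU_eq_sum_oddProb, oddProb_of_uniform _ k (hk _) fun j => hs j _, ← Finset.sum_mul, sum_oddPrior, one_mul]

lemma oddProb_τtype (t : Fin 3 → Bool) : oddProb (fun j => τtype j (t j)) = oddU t := by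
  simp [oddProb, τtype, Fintype.prod_boole, ← funext_iff]

lemma oddEU_τtype (i : Fin 3) : oddEU τtype i = 1 := by
  have hodd (t : Fin 3 → Bool) : oddPrior t * oddU t = oddPrior t := by
    unfold oddPrior oddU; split_ifs <;> simp
  simp only [oddEU_eq_sum_oddProb, oddProb_τtype, hodd, sum_oddPrior]

lemma isStrat_τtype (j : Fin 3) : IsStrat (τtype j) := fun t =>
  ⟨fun a => by unfold τtype; split_ifs <;> norm_num, by cases t <;> simp [τtype]⟩

lemma isStrat_σunif (j : Fin 3) : IsStrat (σunif j) := fun _ =>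
  ⟨fun _ => by norm_num [σunif], by norm_num [σunif]⟩

lemma isStrat_update {s : Fin 3 → Bool → Bool → ℝ} (hs : ∀ j, IsStrat (s j)) (i : Fin 3)
    {s' : Bool → Bool → ℝ} (hs' : IsStrat s') (j : Fin 3) :
    IsStrat (Function.update s i s' j) := by
  by_cases hj : j = i
  · subst hj; simpa using hs'
  · simpa [hj] using hs j

theorem stmt19 :
    -- (i) marginals are uniform and types are pairwise independent
    ((∀ (i : Fin 3) (b : Bool),
        (∑ t : Fin 3 → Bool, if t i = b then oddPrior t else 0) = 1 / 2) ∧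
      (∀ i j : Fin 3, i ≠ j → ∀ b c : Bool,
        (∑ t : Fin 3 → Bool, if t i = b ∧ t j = c then oddPrior t else 0) = 1 / 4)) ∧
    -- (ii) playing one's own type gives expected utility 1 and is a Nash equilibrium
    ((∀ i : Fin 3, oddEU τtype i = 1) ∧
      (∀ (i : Fin 3) (s' : Bool → Bool → ℝ), IsStrat s' →
        oddEU (Function.update τtype i s') i ≤ oddEU τtype i)) ∧
    -- (iii) playing uniformly gives expected utility 1/2 and is a Nash equilibrium
    ((∀ i : Fin 3, oddEU σunif i = 1 / 2) ∧
      (∀ (i : Fin 3) (s' : Bool → Bool → ℝ), IsStrat s' →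
        oddEU (Function.update σunif i s') i ≤ oddEU σunif i)) := by
  have σunif_eu (i : Fin 3) : oddEU σunif i = 1 / 2 :=
    oddEU_of_uniform σunif 0 (fun _ _ => rfl) (fun j t => (isStrat_σunif j t).2) i
  refine ⟨⟨oddPrior_marginal, fun i j hij => oddPrior_pair_marginal hij⟩,
    ⟨oddEU_τtype, fun i s' hs' => ?_⟩, ⟨σunif_eu, fun i s' hs' => ?_⟩⟩
  · rw [oddEU_τtype]
    exact oddEU_le_one _ (isStrat_update isStrat_τtype i hs') i
  · have other_uniform : ∀ t a, Function.update σunif i s' (i + 1) t a = 1 / 2 := by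
      simp [σunif]
    rw [oddEU_of_uniform _ _ other_uniform (fun j t => (isStrat_update isStrat_σunif i hs' j t).2),
      σunif_eu]
end
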